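/- Let Ẑ ∈ S_{++}^d, Γ ∈ S_+^d, Γ ≠ 0, ρ > 0, and let γ* > λ_max(Γ) satisfy ρ² = ⟨Ẑ, (I - γ*(γ*I - Γ)^{-1})²⟩. Then L* = (γ*)² (γ*I - Γ)^{-1} Ẑ (γ*I - Γ)^{-1} satisfies the Gelbrich constraint with equality: G(L*, Ẑ) = ρ, and L* ⪰ λ_min(Ẑ) I. -/

import Mathlib

/-!
Put `B = γ⋆ (γ⋆I - Γ)⁻¹`, so that `L⋆ = B Ẑ B`. With `S = Ẑ^{1/2}`, the matrix `S B S` is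
positive semidefinite and squares to `S L⋆ S`, so it is the square root appearing in the Gelbrich
distance, and the trace defining `G(L⋆, Ẑ)²` collapses to `⟨Ẑ, (I - B)²⟩ = ρ²`.
For the lower bound, `B = f(Γ)` with `f x = γ⋆ / (γ⋆ - x) ≥ 1` on the spectrum of `Γ ⪰ 0`, so
`B ⪰ I`, hence `B² ⪰ I` and `B Ẑ B ⪰ λ_min(Ẑ) B² ⪰ λ_min(Ẑ) I`.
-/

open Matrix

/-- The positive semidefinite square root of a matrix (zero if the matrix is
not positive semidefinite). -/
noncomputable def psdSqrt {d : ℕ} (A : Matrix (Fin d) (Fin d) ℝ) :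
    Matrix (Fin d) (Fin d) ℝ := by
  classical exact if h : A.PosSemidef then
    (h.1.eigenvectorUnitary : Matrix (Fin d) (Fin d) ℝ) *
      diagonal ((↑) ∘ (√·) ∘ h.1.eigenvalues) *
      (star h.1.eigenvectorUnitary : Matrix (Fin d) (Fin d) ℝ) else 0

/-- The Gelbrich distance between covariance matrices. -/
noncomputable def gelbrich {d : ℕ} (S1 S2 : Matrix (Fin d) (Fin d) ℝ) : ℝ :=
  Real.sqrt (S1 + S2 - (2 : ℝ) • psdSqrt (psdSqrt S2 * S1 * psdSqrt S2)).trace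

/-- The largest eigenvalue of a Hermitian matrix. -/
noncomputable def lamMax {d : ℕ} (Γ : Matrix (Fin d) (Fin d) ℝ)
    (hΓ : Γ.IsHermitian) : ℝ :=
  ⨆ i, hΓ.eigenvalues i

/-- The smallest eigenvalue of a Hermitian matrix. -/
noncomputable def lamMin {d : ℕ} (Z : Matrix (Fin d) (Fin d) ℝ)
    (hZ : Z.IsHermitian) : ℝ :=
  ⨅ i, hZ.eigenvalues i

open scoped MatrixOrder

section StarOrderedRing

variable {R : Type*} [Ring R] [PartialOrder R] [StarRing R] [StarOrderedRing R]

theorem one_le_mul_self_of_one_le {b : R} (hb : 1 ≤ b) : 1 ≤ b * b := by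
  have hb₁ : 0 ≤ b - 1 := sub_nonneg.mpr hb
  have hsq : b * b - 1 = (b - 1) * (b - 1) + ((b - 1) + (b - 1)) := by noncomm_ring
  rw [← sub_nonneg, hsq]
  exact add_nonneg (IsSelfAdjoint.of_nonneg hb₁).mul_self_nonneg (add_nonneg hb₁ hb₁)

theorem smul_one_le_conjugate [Algebra ℝ R] [PosSMulMono ℝ R] {μ : ℝ} {z b : R}
    (hz : μ • 1 ≤ z) (hμ : 0 ≤ μ) (hb : 1 ≤ b) : μ • 1 ≤ b * z * b :=
  calc μ • (1 : R) ≤ μ • (b * b) := smul_le_smul_of_nonneg_left (one_le_mul_self_of_one_le hb) hμ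
    _ = b * (μ • 1) * b := by rw [mul_smul_one, smul_mul_assoc]
    _ ≤ b * z * b := (IsSelfAdjoint.of_nonneg (zero_le_one.trans hb)).conjugate_le_conjugate hz

end StarOrderedRing

section Resolvent

variable {n 𝕜 : Type*} [Fintype n] [DecidableEq n] [RCLike 𝕜]

theorem smul_inv_smul_one_sub_eq_cfc {Γ : Matrix n n 𝕜} (hΓ : Γ.IsHermitian) {γ : ℝ}
    (hγ : ∀ x ∈ spectrum ℝ Γ, x < γ) :
    γ • (γ • 1 - Γ)⁻¹ = cfc (fun x => γ / (γ - x)) Γ := by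
  have hcont : ∀ f : ℝ → ℝ, ContinuousOn f (spectrum ℝ Γ) :=
    Matrix.finite_real_spectrum.continuousOn
  have hsub : cfc (fun x => γ - x) Γ = γ • 1 - Γ := by
    rw [cfc_sub .., cfc_const .., cfc_id' .., Algebra.algebraMap_eq_smul_one]
  have hinv : cfc (fun x => (γ - x)⁻¹) Γ = (γ • 1 - Γ)⁻¹ := by
    rw [nonsing_inv_eq_ringInverse, ← hsub]
    exact cfc_inv _ Γ (fun x hx => (sub_pos.mpr (hγ x hx)).ne') (hcont _)
  simp_rw [div_eq_mul_inv]
  rw [cfc_const_mul _ _ _ (hcont _), hinv]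

theorem one_le_smul_inv_smul_one_sub {Γ : Matrix n n 𝕜} (hΓ : 0 ≤ Γ) {γ : ℝ}
    (hγ : ∀ x ∈ spectrum ℝ Γ, x < γ) : 1 ≤ γ • (γ • 1 - Γ)⁻¹ := by
  rw [smul_inv_smul_one_sub_eq_cfc (IsSelfAdjoint.of_nonneg hΓ) hγ]
  refine one_le_cfc _ Γ (fun x hx => ?_) (Matrix.finite_real_spectrum.continuousOn _)
  rw [one_le_div (sub_pos.mpr (hγ x hx))]
  linarith [spectrum_nonneg_of_nonneg hΓ hx]

end Resolvent

section Extremal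

variable {d : ℕ} {A : Matrix (Fin d) (Fin d) ℝ}

theorem le_lamMax_of_mem_spectrum (hA : A.IsHermitian) {x : ℝ} (hx : x ∈ spectrum ℝ A) :
    x ≤ lamMax A hA := by
  obtain ⟨i, rfl⟩ := hA.spectrum_real_eq_range_eigenvalues ▸ hx
  exact le_ciSup (Set.finite_range _).bddAbove i

theorem lamMin_smul_one_le (hA : A.IsHermitian) : lamMin A hA • 1 ≤ A := by
  rw [← Algebra.algebraMap_eq_smul_one]
  refine algebraMap_le_of_le_spectrum (fun x hx => ?_) hA.isSelfAdjoint
  obtain ⟨i, rfl⟩ := hA.spectrum_real_eq_range_eigenvalues ▸ hx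
  exact ciInf_le (Set.finite_range _).bddBelow i

theorem lamMin_nonneg (hA : A.PosSemidef) : 0 ≤ lamMin A hA.1 :=
  Real.iInf_nonneg hA.eigenvalues_nonneg

end Extremal

section Gelbrich

variable {d : ℕ}

theorem psdSqrt_eq_sqrt {A : Matrix (Fin d) (Fin d) ℝ} (hA : 0 ≤ A) : psdSqrt A = CFC.sqrt A := by
  rw [CFC.sqrt_eq_real_sqrt A hA, cfcₙ_eq_cfc, hA.posSemidef.1.cfc_eq]
  unfold psdSqrt
  rw [dif_pos hA.posSemidef]
  simp [Matrix.IsHermitian.cfc, Unitary.conjStarAlgAut_apply, Function.comp_def]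

theorem psdSqrt_mul_self_eq {C : Matrix (Fin d) (Fin d) ℝ} (hC : 0 ≤ C) :
    psdSqrt (C * C) = C := by
  rw [psdSqrt_eq_sqrt (IsSelfAdjoint.of_nonneg hC).mul_self_nonneg, CFC.sqrt_unique rfl hC]

theorem gelbrich_conjugate {Z B : Matrix (Fin d) (Fin d) ℝ} (hZ : 0 ≤ Z) (hB : 0 ≤ B) :
    gelbrich (B * Z * B) Z = √(Z * (1 - B) ^ 2).trace := by
  unfold gelbrich
  rw [psdSqrt_eq_sqrt hZ]
  have hS : 0 ≤ CFC.sqrt Z := CFC.sqrt_nonneg Z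
  have hSS : CFC.sqrt Z * CFC.sqrt Z = Z := CFC.sqrt_mul_sqrt_self Z hZ
  generalize CFC.sqrt Z = S at hS hSS ⊢
  have hroot : psdSqrt (S * (B * Z * B) * S) = S * B * S := by
    rw [← psdSqrt_mul_self_eq (hS.isSelfAdjoint.conjugate_nonneg hB), ← hSS]
    simp only [Matrix.mul_assoc]
  have hSBS : (S * B * S).trace = (Z * B).trace := by
    rw [trace_mul_comm (S * B) S, ← Matrix.mul_assoc, hSS]
  have hBZB : (B * Z * B).trace = (Z * (B * B)).trace := by
    rw [trace_mul_comm (B * Z) B, ← Matrix.mul_assoc, trace_mul_comm (B * B) Z]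
  rw [hroot]
  congr 1
  simp only [sq, Matrix.sub_mul, Matrix.mul_sub, Matrix.mul_one, Matrix.one_mul, trace_sub,
    trace_add, trace_smul, hSBS, hBZB, smul_eq_mul]
  ring

end Gelbrich

theorem oracle_solution_properties_general {d : ℕ}
    (Zh Γ : Matrix (Fin d) (Fin d) ℝ)
    (hZh : Zh.PosDef) (hΓ : Γ.PosSemidef)
    (ρ : ℝ) (hρ : 0 < ρ) (γs : ℝ) (hγs : γs > lamMax Γ hΓ.1)
    (hroot : ρ ^ 2 = (Zhᵀ * ((1 : Matrix (Fin d) (Fin d) ℝ)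
      - γs • (γs • (1 : Matrix (Fin d) (Fin d) ℝ) - Γ)⁻¹) ^ 2).trace) :
    gelbrich (γs ^ 2 • ((γs • (1 : Matrix (Fin d) (Fin d) ℝ) - Γ)⁻¹ * Zh
        * (γs • (1 : Matrix (Fin d) (Fin d) ℝ) - Γ)⁻¹)) Zh = ρ ∧
    (γs ^ 2 • ((γs • (1 : Matrix (Fin d) (Fin d) ℝ) - Γ)⁻¹ * Zh
        * (γs • (1 : Matrix (Fin d) (Fin d) ℝ) - Γ)⁻¹)
      - lamMin Zh hZh.1 • (1 : Matrix (Fin d) (Fin d) ℝ)).PosSemidef := by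
  set B := γs • (γs • (1 : Matrix (Fin d) (Fin d) ℝ) - Γ)⁻¹
  have hB : 1 ≤ B := one_le_smul_inv_smul_one_sub hΓ.nonneg
    fun x hx => (le_lamMax_of_mem_spectrum hΓ.1 hx).trans_lt hγs
  have hL : γs ^ 2 • ((γs • (1 : Matrix (Fin d) (Fin d) ℝ) - Γ)⁻¹ * Zh
      * (γs • (1 : Matrix (Fin d) (Fin d) ℝ) - Γ)⁻¹) = B * Zh * B := by
    simp only [B, sq, mul_smul, smul_mul_assoc, mul_smul_comm]
  rw [hL]
  refine ⟨?_, ?_⟩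
  · rw [gelbrich_conjugate hZh.posSemidef.nonneg (zero_le_one.trans hB),
      ← (isHermitian_iff_isSymm.mp hZh.1).eq, ← hroot, Real.sqrt_sq hρ.le]
  · exact Matrix.le_iff.mp
      (smul_one_le_conjugate (lamMin_smul_one_le hZh.1) (lamMin_nonneg hZh.posSemidef) hB)

/-- If `γ⋆ > λ_max(Γ)` satisfies `ρ² = ⟨Ẑ, (I - γ⋆(γ⋆I - Γ)⁻¹)²⟩`, then
`L⋆ = (γ⋆)² (γ⋆I - Γ)⁻¹ Ẑ (γ⋆I - Γ)⁻¹` attains the Gelbrich constraint with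
equality, `G(L⋆, Ẑ) = ρ`, and satisfies `L⋆ ⪰ λ_min(Ẑ) I`. -/
theorem oracle_solution_properties {d : ℕ}
    (Zh Γ : Matrix (Fin d) (Fin d) ℝ)
    (hZh : Zh.PosDef) (hΓ : Γ.PosSemidef) (hΓne : Γ ≠ 0)
    (ρ : ℝ) (hρ : 0 < ρ) (γs : ℝ) (hγs : γs > lamMax Γ hΓ.1)
    (hroot : ρ ^ 2 = (Zhᵀ * ((1 : Matrix (Fin d) (Fin d) ℝ)
      - γs • (γs • (1 : Matrix (Fin d) (Fin d) ℝ) - Γ)⁻¹) ^ 2).trace) :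
    gelbrich (γs ^ 2 • ((γs • (1 : Matrix (Fin d) (Fin d) ℝ) - Γ)⁻¹ * Zh
        * (γs • (1 : Matrix (Fin d) (Fin d) ℝ) - Γ)⁻¹)) Zh = ρ ∧
    (γs ^ 2 • ((γs • (1 : Matrix (Fin d) (Fin d) ℝ) - Γ)⁻¹ * Zh
        * (γs • (1 : Matrix (Fin d) (Fin d) ℝ) - Γ)⁻¹)
      - lamMin Zh hZh.1 • (1 : Matrix (Fin d) (Fin d) ℝ)).PosSemidef :=
  oracle_solution_properties_general Zh Γ hZh hΓ ρ hρ γs hγs hroot
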